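/- In ZF with Turing determinacy, if f : 𝒟 → ℝ satisfies f(y) ≠ f(y') on no upper cone (i.e., f(y) = f(y') holds on some upper cone, where y' is the Turing jump), and moreover f(y) is Turing below y on an upper cone, then on some upper cone f(y) is strictly Turing below y: the degree of f(y) is < y. -/

import Mathlib

/-- Relativized partial recursiveness: `f` is partial recursive in the oracle `O`. -/
inductive RelRecursiveIn (O : ℕ →. ℕ) : (ℕ →. ℕ) → Prop
  | oracle : RelRecursiveIn O O
  | zero : RelRecursiveIn O (pure 0)
  | succ : RelRecursiveIn O Nat.succ
  | left : RelRecursiveIn O ↑fun n : ℕ => n.unpair.1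
  | right : RelRecursiveIn O ↑fun n : ℕ => n.unpair.2
  | pair {f g} : RelRecursiveIn O f → RelRecursiveIn O g →
      RelRecursiveIn O fun n => Nat.pair <$> f n <*> g n
  | comp {f g} : RelRecursiveIn O f → RelRecursiveIn O g →
      RelRecursiveIn O fun n => g n >>= f
  | prec {f g} : RelRecursiveIn O f → RelRecursiveIn O g →
      RelRecursiveIn O (Nat.unpaired fun a n =>
        n.rec (f a) fun y IH => do let i ← IH; g (Nat.pair a (Nat.pair y i)))
  | rfind {f} : RelRecursiveIn O f →
      RelRecursiveIn O fun a => Nat.rfind fun n => (fun m => m = 0) <$> f (Nat.pair a n)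

theorem RelRecursiveIn.trans' {O O' f : ℕ →. ℕ}
    (hf : RelRecursiveIn O f) (hO : RelRecursiveIn O' O) : RelRecursiveIn O' f := by
  induction hf with
  | oracle => exact hO
  | zero => exact .zero
  | succ => exact .succ
  | left => exact .left
  | right => exact .right
  | pair _ _ ih₁ ih₂ => exact .pair ih₁ ih₂
  | comp _ _ ih₁ ih₂ => exact .comp ih₁ ih₂
  | prec _ _ ih₁ ih₂ => exact .prec ih₁ ih₂
  | rfind _ ih => exact .rfind ih

/-- Reals are identified with elements of Cantor space `2^ω`. -/
abbrev TReal : Type := ℕ → Bool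

/-- The characteristic (total) function of a real, as a partial function on `ℕ`. -/
def charFn (x : TReal) : ℕ →. ℕ := fun n => Part.some (cond (x n) 1 0)

/-- Turing reducibility `x ≤ᵀ y` between reals. -/
def TuringLE (x y : TReal) : Prop := RelRecursiveIn (charFn y) (charFn x)

theorem TuringLE.refl (x : TReal) : TuringLE x x := RelRecursiveIn.oracle

theorem TuringLE.trans {x y z : TReal} (h₁ : TuringLE x y) (h₂ : TuringLE y z) :
    TuringLE x z := RelRecursiveIn.trans' h₁ h₂

/-- Turing equivalence of reals. -/
def TuringEquiv (x y : TReal) : Prop := TuringLE x y ∧ TuringLE y x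

instance turingSetoid : Setoid TReal :=
  ⟨TuringEquiv, fun x => ⟨TuringLE.refl x, TuringLE.refl x⟩, fun h => ⟨h.2, h.1⟩,
    fun h₁ h₂ => ⟨h₁.1.trans h₂.1, h₂.2.trans h₁.2⟩⟩

/-- The Turing degrees. -/
def TDegree : Type := Quotient turingSetoid

/-- The Turing degree of a real. -/
def deg (x : TReal) : TDegree := Quotient.mk _ x

instance : PartialOrder TDegree where
  le := Quotient.lift₂ TuringLE (by
    rintro a b a' b' ⟨hab, hba⟩ ⟨hcd, hdc⟩
    exact propext ⟨fun h => (hba.trans h).trans hcd, fun h => (hab.trans h).trans hdc⟩)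
  le_refl := fun d => Quotient.inductionOn d TuringLE.refl
  le_trans := fun a b c => Quotient.inductionOn₃ a b c fun _ _ _ h₁ h₂ => TuringLE.trans h₁ h₂
  le_antisymm := fun a b => Quotient.inductionOn₂ a b fun _ _ h₁ h₂ => Quotient.sound ⟨h₁, h₂⟩

/-- The upper cone of Turing degrees above `x`. -/
def upperCone (x : TDegree) : Set TDegree := {y | x ≤ y}

/-- Turing determinacy: every set of Turing degrees contains or is disjoint from
an upper cone. -/
def TD : Prop :=
  ∀ A : Set TDegree, (∃ x, upperCone x ⊆ A) ∨ (∃ x, upperCone x ⊆ Aᶜ)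

/-- The countable choice axiom for sets of reals. -/
def CCR : Prop :=
  ∀ A : ℕ → Set TReal, (∀ n, (A n).Nonempty) → ∃ f : ℕ → TReal, ∀ n, f n ∈ A n

/-- Codes for oracle machines. -/
inductive OCode : Type
  | zero
  | succ
  | left
  | right
  | oracle
  | pair : OCode → OCode → OCode
  | comp : OCode → OCode → OCode
  | prec : OCode → OCode → OCode
  | rfind' : OCode → OCode

/-- Evaluation of an oracle code relative to an oracle. -/
def OCode.eval (O : ℕ →. ℕ) : OCode → ℕ →. ℕ
  | .zero => pure 0
  | .succ => Nat.succ
  | .left => ↑fun n : ℕ => n.unpair.1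
  | .right => ↑fun n : ℕ => n.unpair.2
  | .oracle => O
  | .pair cf cg => fun n => Nat.pair <$> cf.eval O n <*> cg.eval O n
  | .comp cf cg => fun n => cg.eval O n >>= cf.eval O
  | .prec cf cg =>
      Nat.unpaired fun a n =>
        n.rec (cf.eval O a) fun y IH => do
          let i ← IH
          cg.eval O (Nat.pair a (Nat.pair y i))
  | .rfind' cf =>
      Nat.unpaired fun a m =>
        (Nat.rfind fun n => (fun x => x = 0) <$> cf.eval O (Nat.pair a (n + m))).map (· + m)

/-- A decoding of natural numbers as oracle codes. -/
def ofNatOCode : ℕ → OCode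
  | 0 => .zero
  | 1 => .succ
  | 2 => .left
  | 3 => .right
  | 4 => .oracle
  | n + 5 =>
    let m := n.div2.div2
    have hm : m < n + 5 := by
      simp only [m, Nat.div2_val]
      exact
        lt_of_le_of_lt (le_trans (Nat.div_le_self _ _) (Nat.div_le_self _ _))
          (Nat.lt_succ_of_le (by omega))
    have _m1 : m.unpair.1 < n + 5 := lt_of_le_of_lt m.unpair_left_le hm
    have _m2 : m.unpair.2 < n + 5 := lt_of_le_of_lt m.unpair_right_le hm
    match n.bodd, n.div2.bodd with
    | false, false => .pair (ofNatOCode m.unpair.1) (ofNatOCode m.unpair.2)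
    | false, true => .comp (ofNatOCode m.unpair.1) (ofNatOCode m.unpair.2)
    | true, false => .prec (ofNatOCode m.unpair.1) (ofNatOCode m.unpair.2)
    | true, true => .rfind' (ofNatOCode m)
decreasing_by
  all_goals first
    | exact _m1 | exact _m2 | exact hm
    | exact Nat.le_of_lt_succ _m1 | exact Nat.le_of_lt_succ _m2 | exact Nat.le_of_lt_succ hm

open Classical in
/-- The Turing jump of a real: its relativized halting problem. -/
noncomputable def jumpReal (x : TReal) : TReal :=
  fun e => decide (((ofNatOCode e).eval (charFn x) e).Dom)

/-- The Turing jump of a Turing degree. -/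
noncomputable def TDegree.jump (d : TDegree) : TDegree :=
  deg (jumpReal (Quotient.out d))

/-! The set `{y | deg (f y) < y}` contains or avoids a cone. If it avoided one, then far enough
up `deg (f y) = y`, so for such `y` the jump gives `y' = deg (f y') = deg (f y) = y`, contradicting
`y < y'`. The work lies in the two facts about degrees this uses: any two have a common upper
bound (the join), and `y < y'`, where `x ≤ x'` is a many-one reduction of `x` to the halting
problem relative to `x` and `x' ≰ x` is the diagonal argument. -/

-- `simp` cannot use `Part.bind_some` when the function is a `PFun`
@[simp]
theorem PFun.some_bind {α β : Type} (a : α) (f : α →. β) : Part.some a >>= f = f a :=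
  Part.bind_some a f

theorem Nat.rfind_const_dom_iff (b : Bool) : (Nat.rfind fun _ => Part.some b).Dom ↔ b = true := by
  refine ⟨fun h => by simpa using Nat.rfind_spec (Part.get_mem h), ?_⟩
  rintro rfl
  exact Nat.rfind_dom.2 ⟨0, Part.mem_some _, fun h => absurd h (Nat.not_lt_zero _)⟩

namespace OCode

def enc : OCode → ℕ
  | .zero => 0
  | .succ => 1
  | .left => 2
  | .right => 3
  | .oracle => 4
  | .pair cf cg => 2 * (2 * Nat.pair cf.enc cg.enc) + 5
  | .comp cf cg => 2 * (2 * Nat.pair cf.enc cg.enc + 1) + 5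
  | .prec cf cg => (2 * (2 * Nat.pair cf.enc cg.enc) + 1) + 5
  | .rfind' cf => (2 * (2 * cf.enc + 1) + 1) + 5

theorem ofNatOCode_enc (c : OCode) : ofNatOCode c.enc = c := by
  induction c <;> simp [enc, ofNatOCode, Nat.div2_val, *]

theorem primrec₂_enc_comp : Primrec₂ fun a b : ℕ => 2 * (2 * Nat.pair a b + 1) + 5 :=
  Primrec.nat_add.comp (Primrec.nat_double.comp (Primrec.nat_double_succ.comp Primrec₂.natPair))
    (Primrec.const 5)

def const : ℕ → OCode
  | 0 => .zero
  | n + 1 => .comp .succ (const n)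

theorem eval_const (O : ℕ →. ℕ) (n m : ℕ) : (const n).eval O m = Part.some n := by
  induction n with
  | zero => rfl
  | succ n ih => simp [const, eval, ih]

theorem primrec_enc_const : Primrec fun n => (const n).enc := by
  refine (Primrec.nat_rec₁ 0 (primrec₂_enc_comp.comp (Primrec.const 1) Primrec.snd).to₂).of_eq
    fun n => ?_
  induction n with
  | zero => rfl
  | succ n ih => simp only [const, enc, ← ih]

end OCode

theorem RelRecursiveIn.exists_code {O f : ℕ →. ℕ} (h : RelRecursiveIn O f) :
    ∃ c : OCode, c.eval O = f := by
  induction h with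
  | oracle => exact ⟨.oracle, rfl⟩
  | zero => exact ⟨.zero, rfl⟩
  | succ => exact ⟨.succ, rfl⟩
  | left => exact ⟨.left, rfl⟩
  | right => exact ⟨.right, rfl⟩
  | pair _ _ hf hg =>
    obtain ⟨cf, rfl⟩ := hf; obtain ⟨cg, rfl⟩ := hg
    exact ⟨.pair cf cg, rfl⟩
  | comp _ _ hf hg =>
    obtain ⟨cf, rfl⟩ := hf; obtain ⟨cg, rfl⟩ := hg
    exact ⟨.comp cf cg, rfl⟩
  | prec _ _ hf hg =>
    obtain ⟨cf, rfl⟩ := hf; obtain ⟨cg, rfl⟩ := hg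
    exact ⟨.prec cf cg, rfl⟩
  | rfind _ hf =>
    obtain ⟨cf, rfl⟩ := hf
    -- `rfind'` searches from an offset, so feed it the offset `0`
    refine ⟨.comp (.rfind' cf) (.pair (.pair .left .right) .zero), ?_⟩
    funext a
    simp [OCode.eval, Seq.seq, pure, PFun.pure, Part.map_id']

theorem Nat.Partrec.relRecursiveIn {f : ℕ →. ℕ} (h : Nat.Partrec f) (O : ℕ →. ℕ) :
    RelRecursiveIn O f := by
  induction h with
  | zero => exact .zero
  | succ => exact .succ
  | left => exact .left
  | right => exact .right
  | pair _ _ ihf ihg => exact .pair ihf ihg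
  | comp _ _ ihf ihg => exact .comp ihf ihg
  | prec _ _ ihf ihg => exact .prec ihf ihg
  | rfind _ ihf => exact .rfind ihf

theorem Primrec.relRecursiveIn {f : ℕ → ℕ} (h : Primrec f) (O : ℕ →. ℕ) :
    RelRecursiveIn O ↑f :=
  (Nat.Partrec.of_primrec (Primrec.nat_iff.1 h)).relRecursiveIn O

-- search for a zero of the constant function `fun _ => charFn y a`
theorem RelRecursiveIn.exists_code_dom_iff {O : ℕ →. ℕ} {y : TReal}
    (h : RelRecursiveIn O (charFn y)) : ∃ c : OCode, ∀ a, (c.eval O a).Dom ↔ y a = false := by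
  obtain ⟨c, hc⟩ := (RelRecursiveIn.rfind (RelRecursiveIn.comp h .left)).exists_code
  refine ⟨c, fun a => ?_⟩
  rw [hc]
  cases hy : y a <;> simp [charFn, hy, Nat.rfind_const_dom_iff]

theorem jumpReal_eq_true_iff (x : TReal) (e : ℕ) :
    jumpReal x e = true ↔ ((ofNatOCode e).eval (charFn x) e).Dom := by
  simp [jumpReal]

theorem TuringLE.comp_of_primrec {g : ℕ → ℕ} (hg : Primrec g) (y : TReal) :
    TuringLE (y ∘ g) y := by
  have h : charFn (y ∘ g) = fun n => (↑g : ℕ →. ℕ) n >>= charFn y := by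
    funext n
    simp [charFn]
  rw [TuringLE, h]
  exact .comp .oracle (hg.relRecursiveIn _)

theorem TuringLE.bnot (y : TReal) : TuringLE (fun n => !y n) y := by
  have h : charFn (fun n => !y n) = fun n => charFn y n >>= (↑(fun v : ℕ => 1 - v) : ℕ →. ℕ) := by
    funext n
    cases hy : y n <;> simp [charFn, hy]
  rw [TuringLE, h]
  exact .comp ((Primrec.nat_sub.comp (Primrec.const 1) Primrec.id).relRecursiveIn _) .oracle

theorem le_jumpReal (x : TReal) : TuringLE x (jumpReal x) := by
  obtain ⟨c, hc⟩ := RelRecursiveIn.exists_code_dom_iff (RelRecursiveIn.oracle (O := charFn x))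
  -- `c.comp (const n)` halts iff `x n = false`, so `x n` is the negated jump at its index
  set g : ℕ → ℕ := fun n => (OCode.comp c (OCode.const n)).enc
  have hg : Primrec g :=
    OCode.primrec₂_enc_comp.comp (Primrec.const c.enc) OCode.primrec_enc_const
  have hx : x = (fun n => !jumpReal x n) ∘ g := by
    funext n
    have h : jumpReal x (g n) = true ↔ x n = false := by
      simp only [jumpReal_eq_true_iff, g, OCode.ofNatOCode_enc, OCode.eval, OCode.eval_const,
        PFun.some_bind, hc]
    cases hn : x n <;> simp_all
  have h := (TuringLE.comp_of_primrec hg _).trans (TuringLE.bnot (jumpReal x))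
  rwa [← hx] at h

theorem jumpReal_not_le (x : TReal) : ¬TuringLE (jumpReal x) x := by
  intro hJ
  obtain ⟨c, hc⟩ := RelRecursiveIn.exists_code_dom_iff hJ
  have h : jumpReal x c.enc = true ↔ jumpReal x c.enc = false := by
    rw [jumpReal_eq_true_iff, OCode.ofNatOCode_enc, hc]
  cases hc : jumpReal x c.enc <;> simp [hc] at h

theorem deg_le_deg {x y : TReal} : deg x ≤ deg y ↔ TuringLE x y := Iff.rfl

theorem TDegree.lt_jump (d : TDegree) : d < d.jump := by
  conv_lhs => rw [← Quotient.out_eq d]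
  exact lt_of_le_not_ge (deg_le_deg.2 (le_jumpReal _)) (deg_le_deg.not.2 (jumpReal_not_le _))

def joinReal (x y : TReal) : TReal := fun n => if n.bodd then y n.div2 else x n.div2

theorem left_le_joinReal (x y : TReal) : TuringLE x (joinReal x y) := by
  have h : x = joinReal x y ∘ fun n => 2 * n := by
    funext n
    simp [joinReal, Nat.bodd_mul, Nat.div2_val]
  conv_lhs => rw [h]
  exact TuringLE.comp_of_primrec Primrec.nat_double _

theorem right_le_joinReal (x y : TReal) : TuringLE y (joinReal x y) := by
  have h : y = joinReal x y ∘ fun n => 2 * n + 1 := by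
    funext n
    simp [joinReal, Nat.bodd_mul, Nat.div2_val]
  conv_lhs => rw [h]
  exact TuringLE.comp_of_primrec Primrec.nat_double_succ _

instance : IsDirected TDegree (· ≤ ·) where
  directed a b := Quotient.inductionOn₂ a b fun x y =>
    ⟨deg (joinReal x y), left_le_joinReal x y, right_le_joinReal x y⟩

/-- Under TD, if `f y = f (y')` on an upper cone and `deg (f y) ≤ y` on an
upper cone, then `deg (f y) < y` on some upper cone. -/
theorem strictly_below_on_cone (td : TD) (f : TDegree → TReal)
    (h₁ : ∃ x : TDegree, ∀ y, x ≤ y → f y = f (TDegree.jump y))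
    (h₂ : ∃ x : TDegree, ∀ y, x ≤ y → deg (f y) ≤ y) :
    ∃ x : TDegree, ∀ y, x ≤ y → deg (f y) < y := by
  obtain ⟨x₁, hx₁⟩ := h₁
  obtain ⟨x₂, hx₂⟩ := h₂
  refine (td {y | deg (f y) < y}).resolve_right fun ⟨x₀, hx₀⟩ => ?_
  obtain ⟨x₁₂, hx₁₂₁, hx₁₂₂⟩ := exists_ge_ge x₁ x₂
  obtain ⟨z, hz₀, hz⟩ := exists_ge_ge x₀ x₁₂
  have hdeg : ∀ y, z ≤ y → deg (f y) = y := fun y hy =>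
    (hx₂ y (hx₁₂₂.trans (hz.trans hy))).eq_of_not_lt (hx₀ (hz₀.trans hy))
  have hjump := z.lt_jump
  refine hjump.ne ?_
  calc z = deg (f z) := (hdeg z le_rfl).symm
    _ = deg (f z.jump) := by rw [hx₁ z (hx₁₂₁.trans hz)]
    _ = z.jump := hdeg _ hjump.le
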